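/- arXiv:2203.13189 — 4 statements merged into one kernel-verified Lean document; each statement's English description precedes it below -/
import Mathlib

section
/- Let A be a module over the localization ℤ_(2) (equivalently, an abelian group on which multiplication by every odd integer is invertible), and let t : ℤ → A be a function satisfying: (i) t j = k • t (k*j) for all nonzero integers j and all odd nonzero integers k; (ii) 2 • t 0 = 0; (iii) for every integer i ≥ 0, t(1+i) + t(2+i) + t(3+i) + t(6+i) + t(-1+i) + t(-2+i) + t(-3+i) + t(-6+i) = 8 • t i. Then 16 • t 1 = 0. -/
/-!
By (i), `t (±2^a m) = ±m⁻¹ • t (2^a)` for odd `m`, so relation (iii) at `i = 1, 2, 3, 5, 9`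
becomes, after clearing the odd denominators, an integer linear relation among `t 1`, `t 2`,
`t 4`, `t 8` and `t 0`. Eliminating `t 2`, `t 4`, `t 8` and `t 0` from these five relations
leaves `46061 • 16 • t 1 = 0`, and `46061` is odd.
-/

namespace CircleRelations

variable {A : Type*} [AddCommGroup A]

def OddEquivariant (t : ℤ → A) : Prop :=
  ∀ j k : ℤ, j ≠ 0 → k ≠ 0 → Odd k → t j = k • t (k * j)

-- The relation coming from the circle `S(1,2,3,-6,0,…,0)`, whose weights are `±1, ±2, ±3, ±6`.
def CircleRelation (t : ℤ → A) : Prop :=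
  ∀ i : ℤ, 0 ≤ i → t (1+i) + t (2+i) + t (3+i) + t (6+i) + t (-1+i) + t (-2+i) + t (-3+i)
    + t (-6+i) = (8:ℤ) • t i

variable {t : ℤ → A}

theorem OddEquivariant.smul_apply_mul (ht : OddEquivariant t) (k n : ℤ)
    (hk : Odd k := by decide) (hn : n ≠ 0 := by decide) : k • t (k * n) = t n :=
  (ht n k hn (by rintro rfl; exact Int.not_odd_zero hk) hk).symm

theorem relation_one (ht : OddEquivariant t) (hc : CircleRelation t) :
    (105:ℤ) • t 4 + (105:ℤ) • t 0 = (916:ℤ) • t 1 := by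
  linear_combination (norm := (norm_num only; module)) 105 • hc 1 (by norm_num)
    + 105 • ht.smul_apply_mul (-1) 1 + 105 • ht.smul_apply_mul (-1) 2 - 35 • ht.smul_apply_mul 3 1
    + 21 • ht.smul_apply_mul (-5) 1 - 15 • ht.smul_apply_mul 7 1

theorem relation_two (ht : OddEquivariant t) (hc : CircleRelation t) :
    (15:ℤ) • t 8 + (15:ℤ) • t 0 + (8:ℤ) • t 1 = (120:ℤ) • t 2 := by
  linear_combination (norm := (norm_num only; module)) 15 • hc 2 (by norm_num)
    + 15 • ht.smul_apply_mul (-1) 1 - 5 • ht.smul_apply_mul 3 1 + 15 • ht.smul_apply_mul (-1) 4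
    - 3 • ht.smul_apply_mul 5 1

theorem relation_three (ht : OddEquivariant t) (hc : CircleRelation t) :
    (45:ℤ) • t 4 + (45:ℤ) • t 0 + (60:ℤ) • t 2 = (76:ℤ) • t 1 := by
  linear_combination (norm := (norm_num only; module)) 45 • hc 3 (by norm_num)
    + 15 • ht.smul_apply_mul (-3) 1 + 120 • ht.smul_apply_mul 3 1 - 9 • ht.smul_apply_mul 5 1
    - 15 • ht.smul_apply_mul 3 2 - 5 • ht.smul_apply_mul 9 1

theorem relation_five (ht : OddEquivariant t) (hc : CircleRelation t) :
    (1155:ℤ) • t 8 + (1155:ℤ) • t 4 + (1540:ℤ) • t 2 = (2348:ℤ) • t 1 := by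
  linear_combination (norm := (norm_num only; module)) 1155 • hc 5 (by norm_num)
    + 1155 • ht.smul_apply_mul (-1) 1 - 385 • ht.smul_apply_mul 3 1 + 1848 • ht.smul_apply_mul 5 1
    - 385 • ht.smul_apply_mul 3 2 - 165 • ht.smul_apply_mul 7 1 - 105 • ht.smul_apply_mul 11 1

theorem relation_nine (ht : OddEquivariant t) (hc : CircleRelation t) :
    (3465:ℤ) • t 8 + (1155:ℤ) • t 4 + (1848:ℤ) • t 2 = (884:ℤ) • t 1 := by
  linear_combination (norm := (norm_num only; module)) 3465 • hc 9 (by norm_num)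
    - 1155 • ht.smul_apply_mul 3 1 - 1155 • ht.smul_apply_mul 3 2 - 495 • ht.smul_apply_mul 7 1
    + 3080 • ht.smul_apply_mul 9 1 - 693 • ht.smul_apply_mul 5 2 - 315 • ht.smul_apply_mul 11 1
    - 1155 • ht.smul_apply_mul 3 4 - 231 • ht.smul_apply_mul 15 1

end CircleRelations

open CircleRelations in
theorem stmt_0_general (A : Type*) [AddCommGroup A]
    (hloc : ∀ k : ℤ, Odd k → Function.Bijective (fun a : A => k • a))
    (t : ℤ → A)
    (h1 : ∀ j k : ℤ, j ≠ 0 → k ≠ 0 → Odd k → t j = k • t (k * j))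
    (h3 : ∀ i : ℤ, 0 ≤ i → t (1+i) + t (2+i) + t (3+i) + t (6+i) + t (-1+i) + t (-2+i) + t (-3+i) + t (-6+i) = (8:ℤ) • t i) :
    (16:ℤ) • t 1 = 0 := by
  have key : (46061:ℤ) • (16:ℤ) • t 1 = (46061:ℤ) • (0:A) := by
    linear_combination (norm := module) 1155 • relation_two h1 h3 + 2002 • relation_three h1 h3
      + 30 • relation_five h1 h3 - 1023 • relation_one h1 h3 - 15 • relation_nine h1 h3
  exact (hloc 46061 (by decide)).1 key

theorem stmt_0 (A : Type*) [AddCommGroup A]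
    (hloc : ∀ k : ℤ, Odd k → Function.Bijective (fun a : A => k • a))
    (t : ℤ → A)
    (h1 : ∀ j k : ℤ, j ≠ 0 → k ≠ 0 → Odd k → t j = k • t (k * j))
    (h2 : (2 : ℤ) • t 0 = 0)
    (h3 : ∀ i : ℤ, 0 ≤ i → t (1+i) + t (2+i) + t (3+i) + t (6+i) + t (-1+i) + t (-2+i) + t (-3+i) + t (-6+i) = (8:ℤ) • t i) :
    (16:ℤ) • t 1 = 0 :=
  stmt_0_general A hloc t h1 h3
end

section
/- Let A be a module over ℤ_(2) and t : ℤ → A a function satisfying: (i) t j = k • t (k*j) for all nonzero integers j and all odd nonzero k; (ii) 2 • t 0 = 0; (iii) for every integer i ≥ 0, t(1+i) + t(2+i) + t(3+i) + t(6+i) + t(-1+i) + t(-2+i) + t(-3+i) + t(-6+i) = 8 • t i. Then t 4 = 4 • t 1 + t 0 and 16 • t 2 = 0. -/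
/-!
Odd-homogeneity gives `t (-j) = -t j` and `m • t (2 ^ e * m) = t (2 ^ e)` for odd `m`, so,
up to odd factors, every `t n` with `n ≠ 0` is `t (2 ^ v₂(n))`. Relation (iii) at
`i = 1, 2, 3, 5`, cleared of odd denominators, thus becomes four linear relations among
`t 0, t 1, t 2, t 4, t 8`. Eliminating `t 4`, `t 8` and `t 0` (using `2 • t 0 = 0`) leaves a
`2 × 2` system in `4 • t 1`, `4 • t 2` whose determinant is `4` times an odd number, so
`16 • t 1` and `16 • t 2` are killed by an odd number, hence vanish. Relation (iii) at `i = 1`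
then gives `t 4`.
-/

section

variable {A : Type*} [AddCommGroup A]

def IsOddHomogeneous (t : ℤ → A) : Prop :=
  ∀ j k : ℤ, j ≠ 0 → k ≠ 0 → Odd k → t j = k • t (k * j)

def SumRelation (t : ℤ → A) (i : ℤ) : Prop :=
  t (1 + i) + t (2 + i) + t (3 + i) + t (6 + i) +
      t (-1 + i) + t (-2 + i) + t (-3 + i) + t (-6 + i) = (8 : ℤ) • t i

namespace IsOddHomogeneous

variable {t : ℤ → A}

theorem smul_apply_of_mul_eq (ht : IsOddHomogeneous t) {j k n : ℤ} (hj : j ≠ 0) (hk : Odd k)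
    (hn : k * j = n) : k • t n = t j := by
  rw [← hn, ← ht j k hj (by rintro rfl; simp at hk) hk]

theorem apply_neg (ht : IsOddHomogeneous t) {j : ℤ} (hj : j ≠ 0) : t (-j) = -t j := by
  rw [← neg_eq_iff_eq_neg, ← neg_one_smul ℤ, ht.smul_apply_of_mul_eq hj (by decide) (by ring)]

theorem reduced_sumRelation_one (ht : IsOddHomogeneous t) (h : SumRelation t 1) :
    (105 : ℤ) • t 4 + (105 : ℤ) • t 0 = (916 : ℤ) • t 1 := by
  norm_num [SumRelation, ht.apply_neg] at h
  have s3 : (3 : ℤ) • t 3 = t 1 :=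
    ht.smul_apply_of_mul_eq one_ne_zero (by decide) (by norm_num)
  have s5 : (5 : ℤ) • t 5 = t 1 :=
    ht.smul_apply_of_mul_eq one_ne_zero (by decide) (by norm_num)
  have s7 : (7 : ℤ) • t 7 = t 1 :=
    ht.smul_apply_of_mul_eq one_ne_zero (by decide) (by norm_num)
  linear_combination (norm := module)
    (105 : ℤ) • h - (35 : ℤ) • s3 + (21 : ℤ) • s5 - (15 : ℤ) • s7

theorem reduced_sumRelation_two (ht : IsOddHomogeneous t) (h : SumRelation t 2) :
    (15 : ℤ) • t 8 + (8 : ℤ) • t 1 + (15 : ℤ) • t 0 = (120 : ℤ) • t 2 := by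
  norm_num [SumRelation, ht.apply_neg] at h
  have s3 : (3 : ℤ) • t 3 = t 1 :=
    ht.smul_apply_of_mul_eq one_ne_zero (by decide) (by norm_num)
  have s5 : (5 : ℤ) • t 5 = t 1 :=
    ht.smul_apply_of_mul_eq one_ne_zero (by decide) (by norm_num)
  linear_combination (norm := module) (15 : ℤ) • h - (5 : ℤ) • s3 - (3 : ℤ) • s5

theorem reduced_sumRelation_three (ht : IsOddHomogeneous t) (h : SumRelation t 3) :
    (45 : ℤ) • t 4 + (60 : ℤ) • t 2 + (45 : ℤ) • t 0 = (76 : ℤ) • t 1 := by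
  norm_num [SumRelation, ht.apply_neg] at h
  have s3 : (3 : ℤ) • t 3 = t 1 :=
    ht.smul_apply_of_mul_eq one_ne_zero (by decide) (by norm_num)
  have s5 : (5 : ℤ) • t 5 = t 1 :=
    ht.smul_apply_of_mul_eq one_ne_zero (by decide) (by norm_num)
  have s6 : (3 : ℤ) • t 6 = t 2 :=
    ht.smul_apply_of_mul_eq two_ne_zero (by decide) (by norm_num)
  have s9 : (9 : ℤ) • t 9 = t 1 :=
    ht.smul_apply_of_mul_eq one_ne_zero (by decide) (by norm_num)
  linear_combination (norm := module)
    (45 : ℤ) • h + (135 : ℤ) • s3 - (9 : ℤ) • s5 - (15 : ℤ) • s6 - (5 : ℤ) • s9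

theorem reduced_sumRelation_five (ht : IsOddHomogeneous t) (h : SumRelation t 5) :
    (1155 : ℤ) • t 8 + (1155 : ℤ) • t 4 + (1540 : ℤ) • t 2 = (2348 : ℤ) • t 1 := by
  norm_num [SumRelation, ht.apply_neg] at h
  have s3 : (3 : ℤ) • t 3 = t 1 :=
    ht.smul_apply_of_mul_eq one_ne_zero (by decide) (by norm_num)
  have s5 : (5 : ℤ) • t 5 = t 1 :=
    ht.smul_apply_of_mul_eq one_ne_zero (by decide) (by norm_num)
  have s6 : (3 : ℤ) • t 6 = t 2 :=
    ht.smul_apply_of_mul_eq two_ne_zero (by decide) (by norm_num)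
  have s7 : (7 : ℤ) • t 7 = t 1 :=
    ht.smul_apply_of_mul_eq one_ne_zero (by decide) (by norm_num)
  have s11 : (11 : ℤ) • t 11 = t 1 :=
    ht.smul_apply_of_mul_eq one_ne_zero (by decide) (by norm_num)
  linear_combination (norm := module) (1155 : ℤ) • h - (385 : ℤ) • s3 + (1848 : ℤ) • s5
    - (385 : ℤ) • s6 - (165 : ℤ) • s7 - (105 : ℤ) • s11

end IsOddHomogeneous

end

theorem stmt_1 (A : Type*) [AddCommGroup A]
    (hloc : ∀ k : ℤ, Odd k → Function.Bijective (fun a : A => k • a))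
    (t : ℤ → A)
    (h1 : ∀ j k : ℤ, j ≠ 0 → k ≠ 0 → Odd k → t j = k • t (k * j))
    (h2 : (2 : ℤ) • t 0 = 0)
    (h3 : ∀ i : ℤ, 0 ≤ i → t (1+i) + t (2+i) + t (3+i) + t (6+i) + t (-1+i) + t (-2+i) + t (-3+i) + t (-6+i) = (8:ℤ) • t i) :
    t 4 = (4:ℤ) • t 1 + t 0 ∧ (16:ℤ) • t 2 = 0 := by
  have ht : IsOddHomogeneous t := h1
  have hreg (k : ℤ) (hk : Odd k) : IsSMulRegular A k := (hloc k hk).injective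
  have r1 := ht.reduced_sumRelation_one (h3 1 zero_le_one)
  have r2 := ht.reduced_sumRelation_two (h3 2 zero_le_two)
  have r3 := ht.reduced_sumRelation_three (h3 3 (by norm_num))
  have r5 := ht.reduced_sumRelation_five (h3 5 (by norm_num))
  have hA : (554 : ℤ) • ((4 : ℤ) • t 1) + (105 : ℤ) • ((4 : ℤ) • t 2) = 0 := by
    linear_combination (norm := module) (7 : ℤ) • r3 - (3 : ℤ) • r1
  have hB : (1778 : ℤ) • ((4 : ℤ) • t 1) + (2695 : ℤ) • ((4 : ℤ) • t 2) = 0 := by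
    linear_combination (norm := module)
      r5 - (11 : ℤ) • r1 - (77 : ℤ) • r2 + (1155 : ℤ) • h2
  -- Cramer's rule: the determinant of `hA`, `hB` is `554 * 2695 - 105 * 1778 = 4 * 326585`.
  have ht1 : (16 : ℤ) • t 1 = 0 := (hreg 326585 (by decide)).right_eq_zero_of_smul <| by
    linear_combination (norm := module) (2695 : ℤ) • hA - (105 : ℤ) • hB
  have ht2 : (16 : ℤ) • t 2 = 0 := (hreg 326585 (by decide)).right_eq_zero_of_smul <| by
    linear_combination (norm := module) (554 : ℤ) • hB - (1778 : ℤ) • hA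
  refine ⟨sub_eq_zero.mp <| (hreg 105 (by decide)).right_eq_zero_of_smul ?_, ht2⟩
  linear_combination (norm := module) r1 + (31 : ℤ) • ht1 - (105 : ℤ) • h2
end

section
/- Let A be a module over ℤ_(2) and t : ℤ → A a function satisfying: (i) t j = k • t (k*j) for all nonzero j and all odd nonzero k; (ii) 2 • t 0 = 0; (iii) for every i ≥ 0, 2•t(2+i) + t(4+i) + t(6+i) + 2•t(-2+i) + t(-4+i) + t(-6+i) = 8 • t i. Then 8 • t 1 = 0. -/
/-!
Evaluating (iii) at `i = 1` and using the oddness `t (-j) = -t j` coming from (i) with `k = -1`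
gives `t 3 + t 7 = 10 • t 1`. Since `t 1 = 3 • t 3 = 7 • t 7`, multiplying by `21` yields
`210 • t 1 = 10 • t 1`, i.e. `25 • 8 • t 1 = 0`, and `25` is invertible on `A`.
-/

section OddScaling

variable {A : Type*} [AddCommGroup A] {t : ℤ → A}
  (hodd : ∀ j k : ℤ, j ≠ 0 → k ≠ 0 → Odd k → t j = k • t (k * j))

include hodd

theorem apply_neg_of_odd_scaling {j : ℤ} (hj : j ≠ 0) : t (-j) = -t j := by
  have h := hodd j (-1) hj (by norm_num) (by decide)
  rw [neg_one_mul, neg_one_smul] at h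
  rw [h, neg_neg]

theorem apply_three_add_apply_seven
    (hrel : (2:ℤ) • t 3 + t 5 + t 7 + (2:ℤ) • t (-1) + t (-3) + t (-5) = (8:ℤ) • t 1) :
    t 3 + t 7 = (10:ℤ) • t 1 := by
  rw [apply_neg_of_odd_scaling hodd one_ne_zero, apply_neg_of_odd_scaling hodd three_ne_zero,
    apply_neg_of_odd_scaling hodd (by norm_num : (5:ℤ) ≠ 0)] at hrel
  calc t 3 + t 7 = ((2:ℤ) • t 3 + t 5 + t 7 + (2:ℤ) • -t 1 + -t 3 + -t 5) + (2:ℤ) • t 1 := by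
        simp only [smul_neg]; abel
    _ = (10:ℤ) • t 1 := by rw [hrel, ← add_smul]; norm_num

theorem two_hundred_smul_apply_one_eq_zero (h : t 3 + t 7 = (10:ℤ) • t 1) :
    (200:ℤ) • t 1 = 0 := by
  have h3 : t 1 = (3:ℤ) • t 3 := by simpa using hodd 1 3 one_ne_zero (by norm_num) (by decide)
  have h7 : t 1 = (7:ℤ) • t 7 := by simpa using hodd 1 7 one_ne_zero (by norm_num) (by decide)
  have h21 : (21:ℤ) • (t 3 + t 7) = (10:ℤ) • t 1 := by
    rw [smul_add, show (21:ℤ) = 7 * 3 by norm_num, mul_smul, ← h3, mul_comm, mul_smul, ← h7,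
      ← add_smul]
    norm_num
  rw [h, smul_smul] at h21
  rw [show (200:ℤ) = 21 * 10 - 10 by norm_num, sub_smul, h21, sub_self]

end OddScaling

theorem stmt_5_general (A : Type*) [AddCommGroup A]
    (hloc : ∀ k : ℤ, Odd k → Function.Bijective (fun a : A => k • a))
    (t : ℤ → A)
    (h1 : ∀ j k : ℤ, j ≠ 0 → k ≠ 0 → Odd k → t j = k • t (k * j))
    (h3 : ∀ i : ℤ, 0 ≤ i → (2:ℤ)•t (2+i) + t (4+i) + t (6+i) + (2:ℤ)•t (-2+i) + t (-4+i) + t (-6+i) = (8:ℤ) • t i) :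
    (8:ℤ) • t 1 = 0 := by
  have hrel := h3 1 zero_le_one
  norm_num at hrel
  have h200 := two_hundred_smul_apply_one_eq_zero h1 (apply_three_add_apply_seven h1 hrel)
  refine (hloc 25 (by decide)).injective ?_
  rw [smul_smul, smul_zero]
  exact h200

theorem stmt_5 (A : Type*) [AddCommGroup A]
    (hloc : ∀ k : ℤ, Odd k → Function.Bijective (fun a : A => k • a))
    (t : ℤ → A)
    (h1 : ∀ j k : ℤ, j ≠ 0 → k ≠ 0 → Odd k → t j = k • t (k * j))
    (h2 : (2 : ℤ) • t 0 = 0)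
    (h3 : ∀ i : ℤ, 0 ≤ i → (2:ℤ)•t (2+i) + t (4+i) + t (6+i) + (2:ℤ)•t (-2+i) + t (-4+i) + t (-6+i) = (8:ℤ) • t i) :
    (8:ℤ) • t 1 = 0 :=
  stmt_5_general A hloc t h1 h3
end

section
/- Let A be a module over ℤ_(3) and t : ℤ → A a function satisfying: (i) t j = k • t (k*j) for all nonzero j and all nonzero k coprime to 3; (ii) 2 • t 0 = 0; (iii) for every i ≥ 0, 21•t(1+i) + 7•t(3+i) + 21•t(-1+i) + 7•t(-3+i) = 52 • t i. Then t 1 = 0. -/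
/-! The instance `i = 1` of (iii) already suffices. By (ii), invertibility of `2` gives `t 0 = 0`;
by (i), `t (-2) = -t 2` and `t 1 = 2 • t 2 = 4 • t 4`. Substituting into
`21 • t 2 + 7 • t 4 + 21 • t 0 + 7 • t (-2) = 52 • t 1` and multiplying by `4` yields
`173 • t 1 = 0`, and `173` is prime to `3`. -/

theorem stmt_13 (A : Type*) [AddCommGroup A]
    (hloc : ∀ k : ℤ, IsCoprime k 3 → Function.Bijective (fun a : A => k • a))
    (t : ℤ → A)
    (h1 : ∀ j k : ℤ, j ≠ 0 → k ≠ 0 → IsCoprime k 3 → t j = k • t (k * j))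
    (h2 : (2 : ℤ) • t 0 = 0)
    (h3 : ∀ i : ℤ, 0 ≤ i → (21:ℤ)•t (1+i) + (7:ℤ)•t (3+i) + (21:ℤ)•t (-1+i) + (7:ℤ)•t (-3+i) = (52:ℤ) • t i) :
    t 1 = 0 := by
  have coprime : ∀ k : ℤ, Int.gcd k 3 = 1 → IsCoprime k 3 := fun _ ↦ Int.isCoprime_iff_gcd_eq_one.2
  have ht0 : t 0 = 0 := (hloc 2 (coprime 2 rfl)).injective (by simpa using h2)
  have ht2 : t 1 = (2:ℤ) • t 2 := by simpa using h1 1 2 one_ne_zero two_ne_zero (coprime 2 rfl)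
  have ht4 : t 1 = (4:ℤ) • t 4 := by simpa using h1 1 4 one_ne_zero four_ne_zero (coprime 4 rfl)
  have htm2 : t (-2) = -t 2 := by simpa using h1 (-2) (-1) (by norm_num) (by norm_num) (coprime (-1) rfl)
  have hrec : (14:ℤ) • t 2 + (7:ℤ) • t 4 = (52:ℤ) • t 1 := by
    have h := h3 1 zero_le_one
    norm_num [ht0, htm2] at h
    linear_combination (norm := module) h
  have h173 : (173:ℤ) • t 1 = 0 := by
    linear_combination (norm := module) -(4:ℤ) • hrec - (28:ℤ) • ht2 - (7:ℤ) • ht4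
  exact (hloc 173 (coprime 173 rfl)).injective (by simpa using h173)
end
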